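/- Consider the discrete-time delayed system Σ: x(k+1) = f(x(k)) + g(x(k−d(k))) for k ∈ ℕ_0, with x(k) = φ(k) for k ∈ {−d_max,…,0}, where f(0) = g(0) = 0, f and g are non-decreasing on ℝ^n_+, both f and g are homogeneous of degree p > 0 with respect to the dilation map δ_λ^r, and the delay d satisfies Assumption C. If there exists a vector v > 0 such that f(v) + g(v) < v (componentwise), then the origin is asymptotically stable with respect to initial conditions satisfying 0 ≤ φ(k) ≤ v for all k ∈ {−d_max,…,0}; in particular, every solution from such an initial condition converges to the origin as k → ∞. -/

import Mathlib

open Real Filter Set Asymptotics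

/-- A vector field `g` is non-decreasing on the nonnegative orthant. -/
def NonDecOn (n : ℕ) (g : (Fin n → ℝ) → Fin n → ℝ) : Prop :=
  ∀ x y : Fin n → ℝ, (∀ i, 0 ≤ y i) → (∀ i, y i ≤ x i) → ∀ i, g y i ≤ g x i

/-- `f` is homogeneous of degree `p` with respect to the dilation map `δ_λ^r`. -/
def Homogeneous (n : ℕ) (r : Fin n → ℝ) (p : ℝ) (f : (Fin n → ℝ) → Fin n → ℝ) : Prop :=
  ∀ (x : Fin n → ℝ) (l : ℝ), 0 < l →
    f (fun i => l ^ r i * x i) = fun i => l ^ p * (l ^ r i * f x i)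

/-- Assumption C on the delay: `d : ℕ₀ → ℕ₀` satisfies `k - d(k) → ∞`, and
`dmax ∈ ℕ₀` bounds the initial-history window: `k - d(k) ≥ -dmax` for all `k`. -/
def DelayC (d : ℕ → ℕ) (dmax : ℕ) : Prop :=
  Tendsto (fun k : ℕ => (k : ℤ) - (d k : ℤ)) atTop atTop ∧
    ∀ k : ℕ, -(dmax : ℤ) ≤ (k : ℤ) - (d k : ℤ)

/-- A solution of the discrete delayed system `x(k+1) = f(x(k)) + g(x(k - d(k)))`, `k ∈ ℕ₀`,
with initial condition `φ` on `{-dmax, …, 0}`. -/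
def IsSolutionD (n : ℕ) (f g : (Fin n → ℝ) → Fin n → ℝ) (d : ℕ → ℕ) (dmax : ℕ)
    (φ x : ℤ → Fin n → ℝ) : Prop :=
  (∀ k : ℤ, -(dmax : ℤ) ≤ k → k ≤ 0 → x k = φ k) ∧
    ∀ k : ℕ, x ((k : ℤ) + 1) = f (x (k : ℤ)) + g (x ((k : ℤ) - (d k : ℤ)))

/-- A nonnegative initial condition on `{-dmax, …, 0}`. -/
def NonnegInitD (n : ℕ) (dmax : ℕ) (φ : ℤ → Fin n → ℝ) : Prop :=
  ∀ k : ℤ, -(dmax : ℤ) ≤ k → k ≤ 0 → ∀ i, 0 ≤ φ k i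

/-- Global asymptotic stability of the discrete delayed system: Lyapunov stability of the
origin plus global attractivity over nonnegative initial conditions. -/
def GASD (n : ℕ) (f g : (Fin n → ℝ) → Fin n → ℝ) (d : ℕ → ℕ) (dmax : ℕ) : Prop :=
  (∀ ε > (0 : ℝ), ∃ δ > (0 : ℝ), ∀ φ x : ℤ → Fin n → ℝ,
      NonnegInitD n dmax φ → IsSolutionD n f g d dmax φ x →
      (∀ k : ℤ, -(dmax : ℤ) ≤ k → k ≤ 0 → ‖φ k‖ < δ) →
      ∀ k : ℕ, ‖x (k : ℤ)‖ < ε) ∧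
  ∀ φ x : ℤ → Fin n → ℝ, NonnegInitD n dmax φ → IsSolutionD n f g d dmax φ x →
      Tendsto (fun k : ℕ => x (k : ℤ)) atTop (nhds 0)

/-! Monotonicity and homogeneity make every box `[0, δ_λ v]`, `0 < λ ≤ 1`, invariant under
`(a, b) ↦ f a + g b`: there `f a + g b ≤ f (δ_λ v) + g (δ_λ v) = λ ^ p δ_λ (f v + g v) ≤ δ_λ v`.
The strict inequality `f v + g v < v` even gives `f v + g v ≤ δ_q v` for some `q < 1`, so once the
current and the delayed state both lie in `[0, δ_λ v]`, the next state lies in `[0, δ_{λq} v]`.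
As `k - d k → ∞`, a solution starting in `[0, v]` eventually enters each box `[0, δ_{q^j} v]`,
and these boxes shrink to the origin. -/

open scoped Topology

section Dilation

variable {ι : Type*}

noncomputable def dilation (r : ι → ℝ) (l : ℝ) (x : ι → ℝ) : ι → ℝ := fun i => l ^ r i * x i

variable {r : ι → ℝ} {l q : ℝ} {x y : ι → ℝ}

@[simp]
theorem dilation_apply (i : ι) : dilation r l x i = l ^ r i * x i := rfl

@[simp]
theorem dilation_one : dilation r 1 x = x := by
  ext i; simp

theorem dilation_zero (hr : ∀ i, r i ≠ 0) : dilation r 0 x = 0 := by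
  ext i; simp [zero_rpow (hr i)]

theorem dilation_add : dilation r l (x + y) = dilation r l x + dilation r l y := by
  ext i; simp [mul_add]

theorem dilation_dilation (hl : 0 ≤ l) (hq : 0 ≤ q) :
    dilation r l (dilation r q x) = dilation r (l * q) x := by
  ext i; simp [mul_rpow hl hq, mul_assoc]

theorem dilation_nonneg (hl : 0 ≤ l) (hx : 0 ≤ x) : 0 ≤ dilation r l x := fun i =>
  mul_nonneg (rpow_nonneg hl _) (hx i)

theorem dilation_mono (hl : 0 ≤ l) (hxy : x ≤ y) : dilation r l x ≤ dilation r l y := fun i =>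
  mul_le_mul_of_nonneg_left (hxy i) (rpow_nonneg hl _)

theorem continuousAt_dilation (h : ∀ i, l ≠ 0 ∨ 0 ≤ r i) :
    ContinuousAt (fun l => dilation r l x) l :=
  continuousAt_pi.2 fun i => (continuousAt_rpow_const l (r i) (h i)).mul continuousAt_const

theorem tendsto_dilation_nhds_zero (hr : ∀ i, 0 < r i) :
    Tendsto (fun l => dilation r l x) (𝓝 0) (𝓝 0) := by
  simpa only [dilation_zero fun i => (hr i).ne'] using
    (continuousAt_dilation (l := 0) (x := x) fun i => Or.inr (hr i).le).tendsto

theorem tendsto_dilation_nhds_one : Tendsto (fun l => dilation r l x) (𝓝 1) (𝓝 x) := by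
  simpa only [dilation_one] using
    (continuousAt_dilation (r := r) (x := x) fun _ => Or.inl one_ne_zero).tendsto

theorem exists_mem_Ioo_le_dilation [Finite ι] (h : ∀ i, y i < x i) :
    ∃ q ∈ Ioo (0 : ℝ) 1, y ≤ dilation r q x := by
  have hlt : ∀ᶠ q in 𝓝 1, ∀ i, y i < dilation r q x i := eventually_all.2 fun i =>
    (tendsto_pi_nhds.1 tendsto_dilation_nhds_one i).eventually (lt_mem_nhds (h i))
  have hIoo : ∀ᶠ q in 𝓝[<] 1, q ∈ Ioo (0 : ℝ) 1 := Ioo_mem_nhdsLT one_pos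
  obtain ⟨q, hq, hqx⟩ := (hIoo.and (nhdsWithin_le_nhds hlt)).exists
  exact ⟨q, hq, fun i => (hqx i).le⟩

theorem exists_norm_dilation_lt [Fintype ι] (hr : ∀ i, 0 < r i) {ε : ℝ} (hε : 0 < ε) :
    ∃ l ∈ Ioc (0 : ℝ) 1, ‖dilation r l x‖ < ε := by
  have hlt : ∀ᶠ l in 𝓝 0, ‖dilation r l x‖ < ε :=
    (tendsto_dilation_nhds_zero hr).norm.eventually (by simpa using gt_mem_nhds hε)
  have hIoc : ∀ᶠ l in 𝓝[>] 0, l ∈ Ioc (0 : ℝ) 1 := Ioc_mem_nhdsGT one_pos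
  exact (hIoc.and (nhdsWithin_le_nhds hlt)).exists

end Dilation

section Orthant

variable {ι : Type*} [Fintype ι]

theorem norm_le_norm_of_mem_Icc {x c : ι → ℝ} (hx : x ∈ Icc 0 c) : ‖x‖ ≤ ‖c‖ :=
  (pi_norm_le_iff_of_nonneg (norm_nonneg c)).2 fun i =>
    (abs_le_abs_of_nonneg (hx.1 i) (hx.2 i)).trans (norm_le_pi_norm c i)

theorem exists_pos_forall_norm_lt_le {c : ι → ℝ} (hc : ∀ i, 0 < c i) :
    ∃ δ > 0, ∀ y : ι → ℝ, ‖y‖ < δ → y ≤ c := by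
  have hle : ∀ᶠ y in 𝓝 (0 : ι → ℝ), ∀ i, y i < c i := eventually_all.2 fun i =>
    (continuous_apply i).continuousAt.eventually (gt_mem_nhds (hc i))
  obtain ⟨δ, hδ, hδc⟩ := Metric.eventually_nhds_iff.1 hle
  exact ⟨δ, hδ, fun y hy i => (hδc (by rwa [dist_zero_right]) i).le⟩

theorem tendsto_nhds_zero_of_forall_eventually_mem_Icc {α : Type*} {L : Filter α}
    {u : α → ι → ℝ} {c : ℕ → ι → ℝ} (hc : Tendsto c atTop (𝓝 0))
    (hu : ∀ j, ∀ᶠ a in L, u a ∈ Icc 0 (c j)) : Tendsto u L (𝓝 0) := by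
  refine NormedAddGroup.tendsto_nhds_zero.2 fun ε hε => ?_
  obtain ⟨j, hj⟩ := (hc.norm.eventually (gt_mem_nhds (by simpa using hε))).exists
  filter_upwards [hu j] with a ha using (norm_le_norm_of_mem_Icc ha).trans_lt hj

end Orthant

section VectorField

variable {n : ℕ} {f : (Fin n → ℝ) → Fin n → ℝ} {r : Fin n → ℝ} {p : ℝ}

theorem NonDecOn.apply_le (hf : NonDecOn n f) {x y : Fin n → ℝ} (hy : 0 ≤ y) (hyx : y ≤ x) :
    f y ≤ f x :=
  hf x y hy hyx

theorem NonDecOn.apply_nonneg (hf : NonDecOn n f) (hf0 : f 0 = 0) {x : Fin n → ℝ} (hx : 0 ≤ x) :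
    0 ≤ f x :=
  hf0 ▸ hf.apply_le le_rfl hx

theorem Homogeneous.apply_dilation (hf : Homogeneous n r p f) {l : ℝ} (hl : 0 < l)
    (x : Fin n → ℝ) : f (dilation r l x) = l ^ p • dilation r l (f x) :=
  hf x l hl

theorem add_mem_Icc_dilation {g : (Fin n → ℝ) → Fin n → ℝ} (hp : 0 ≤ p)
    (hf0 : f 0 = 0) (hg0 : g 0 = 0) (hfmono : NonDecOn n f) (hgmono : NonDecOn n g)
    (hfhom : Homogeneous n r p f) (hghom : Homogeneous n r p g)
    {v a b : Fin n → ℝ} (hv : 0 ≤ v) {l : ℝ} (hl : l ∈ Ioc 0 1)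
    (ha : a ∈ Icc 0 (dilation r l v)) (hb : b ∈ Icc 0 (dilation r l v)) :
    f a + g b ∈ Icc 0 (dilation r l (f v + g v)) := by
  have hfgv : 0 ≤ f v + g v := add_nonneg (hfmono.apply_nonneg hf0 hv) (hgmono.apply_nonneg hg0 hv)
  refine ⟨add_nonneg (hfmono.apply_nonneg hf0 ha.1) (hgmono.apply_nonneg hg0 hb.1), ?_⟩
  calc f a + g b ≤ f (dilation r l v) + g (dilation r l v) :=
        add_le_add (hfmono.apply_le ha.1 ha.2) (hgmono.apply_le hb.1 hb.2)
    _ = l ^ p • dilation r l (f v + g v) := by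
        rw [hfhom.apply_dilation hl.1, hghom.apply_dilation hl.1, dilation_add, smul_add]
    _ ≤ dilation r l (f v + g v) :=
        smul_le_of_le_one_left (dilation_nonneg hl.1.le hfgv) (rpow_le_one hl.1.le hl.2 hp)

end VectorField

namespace IsSolutionD

variable {n : ℕ} {f g : (Fin n → ℝ) → Fin n → ℝ} {d : ℕ → ℕ} {dmax : ℕ}
  {φ x : ℤ → Fin n → ℝ} {S T : Set (Fin n → ℝ)}

theorem mem_of_invariant (hx : IsSolutionD n f g d dmax φ x)
    (hd : ∀ k : ℕ, -(dmax : ℤ) ≤ k - d k) (hS : ∀ a ∈ S, ∀ b ∈ S, f a + g b ∈ S)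
    (hφ : ∀ k : ℤ, -(dmax : ℤ) ≤ k → k ≤ 0 → φ k ∈ S) (m : ℤ) (hm : -(dmax : ℤ) ≤ m) :
    x m ∈ S := by
  suffices ∀ N : ℕ, ∀ m : ℤ, -(dmax : ℤ) ≤ m → m ≤ N → x m ∈ S from
    this m.toNat m hm (Int.self_le_toNat m)
  intro N
  induction N with
  | zero =>
    intro m h₁ h₂
    rw [hx.1 m h₁ (mod_cast h₂)]
    exact hφ m h₁ (mod_cast h₂)
  | succ N ih =>
    intro m h₁ h₂
    rcases le_or_gt m N with h | h
    · exact ih m h₁ h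
    · obtain rfl : m = N + 1 := by push_cast at h₂; omega
      rw [hx.2 N]
      exact hS _ (ih N (by omega) le_rfl) _ (ih _ (hd N) (by omega))

theorem eventually_mem_of_add_mem (hx : IsSolutionD n f g d dmax φ x)
    (hd : Tendsto (fun k : ℕ => (k : ℤ) - d k) atTop atTop)
    (hST : ∀ a ∈ S, ∀ b ∈ S, f a + g b ∈ T) (hS : ∀ᶠ m in atTop, x m ∈ S) :
    ∀ᶠ m in atTop, x m ∈ T := by
  have hnext : ∀ᶠ k : ℕ in atTop, x (k + 1) ∈ T := by
    filter_upwards [tendsto_natCast_atTop_atTop.eventually hS, hd.eventually hS] with k h₁ h₂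
    rw [hx.2 k]
    exact hST _ h₁ _ h₂
  obtain ⟨N, hN⟩ := eventually_atTop.1 hnext
  filter_upwards [eventually_ge_atTop ((N : ℤ) + 1)] with m hm
  obtain ⟨k, rfl⟩ : ∃ k : ℕ, m = k + 1 := ⟨(m - 1).toNat, by omega⟩
  exact hN k (by omega)

theorem eventually_mem_Icc_dilation_pow {r v : Fin n → ℝ} {q : ℝ}
    (hx : IsSolutionD n f g d dmax φ x) (hd : Tendsto (fun k : ℕ => (k : ℤ) - d k) atTop atTop)
    (hq : q ∈ Ioc 0 1) (hcontract : ∀ l ∈ Ioc (0 : ℝ) 1, ∀ a ∈ Icc 0 (dilation r l v),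
      ∀ b ∈ Icc 0 (dilation r l v), f a + g b ∈ Icc 0 (dilation r (l * q) v))
    (h₀ : ∀ᶠ m in atTop, x m ∈ Icc 0 v) (j : ℕ) :
    ∀ᶠ m in atTop, x m ∈ Icc 0 (dilation r (q ^ j) v) := by
  induction j with
  | zero => simpa only [pow_zero, dilation_one] using h₀
  | succ j ih =>
    rw [pow_succ]
    exact hx.eventually_mem_of_add_mem hd
      (hcontract _ ⟨pow_pos hq.1 j, pow_le_one₀ hq.1.le hq.2⟩) ih

end IsSolutionD

theorem discrete_homogeneous_nondecreasing_local_asymptotic_stability_general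
    (n : ℕ) (f g : (Fin n → ℝ) → Fin n → ℝ)
    (r : Fin n → ℝ) (hr : ∀ i, 0 < r i) (p : ℝ) (hp : 0 < p)
    (hf0 : f 0 = 0) (hg0 : g 0 = 0)
    (hfmono : NonDecOn n f) (hgmono : NonDecOn n g)
    (hfhom : Homogeneous n r p f) (hghom : Homogeneous n r p g)
    (d : ℕ → ℕ) (dmax : ℕ) (hd : DelayC d dmax)
    (v : Fin n → ℝ) (hv : ∀ i, 0 < v i) (hfgv : ∀ i, f v i + g v i < v i) :
    (∀ ε > (0 : ℝ), ∃ δ > (0 : ℝ), ∀ φ x : ℤ → Fin n → ℝ,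
        (∀ k : ℤ, -(dmax : ℤ) ≤ k → k ≤ 0 → ∀ i, 0 ≤ φ k i ∧ φ k i ≤ v i) →
        IsSolutionD n f g d dmax φ x →
        (∀ k : ℤ, -(dmax : ℤ) ≤ k → k ≤ 0 → ‖φ k‖ < δ) →
        ∀ k : ℕ, ‖x (k : ℤ)‖ < ε) ∧
    ∀ φ x : ℤ → Fin n → ℝ,
      (∀ k : ℤ, -(dmax : ℤ) ≤ k → k ≤ 0 → ∀ i, 0 ≤ φ k i ∧ φ k i ≤ v i) →
      IsSolutionD n f g d dmax φ x →
      Tendsto (fun k : ℕ => x (k : ℤ)) atTop (nhds 0) := by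
  have hstep : ∀ {l a b}, l ∈ Ioc (0 : ℝ) 1 → a ∈ Icc 0 (dilation r l v) →
      b ∈ Icc 0 (dilation r l v) → f a + g b ∈ Icc 0 (dilation r l (f v + g v)) :=
    add_mem_Icc_dilation hp.le hf0 hg0 hfmono hgmono hfhom hghom fun i => (hv i).le
  obtain ⟨q, hq, hqv⟩ := exists_mem_Ioo_le_dilation (r := r) hfgv
  have hinv : ∀ l ∈ Ioc (0 : ℝ) 1, ∀ a ∈ Icc 0 (dilation r l v), ∀ b ∈ Icc 0 (dilation r l v),
      f a + g b ∈ Icc 0 (dilation r l v) := fun l hl a ha b hb =>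
    Icc_subset_Icc_right (dilation_mono hl.1.le fun i => (hfgv i).le) (hstep hl ha hb)
  have hcontract : ∀ l ∈ Ioc (0 : ℝ) 1, ∀ a ∈ Icc 0 (dilation r l v),
      ∀ b ∈ Icc 0 (dilation r l v), f a + g b ∈ Icc 0 (dilation r (l * q) v) :=
    fun l hl a ha b hb => Icc_subset_Icc_right
      (dilation_dilation hl.1.le hq.1.le ▸ dilation_mono hl.1.le hqv) (hstep hl ha hb)
  refine ⟨fun ε hε => ?_, fun φ x hφ hx => ?_⟩
  · obtain ⟨l, hl, hlε⟩ := exists_norm_dilation_lt (x := v) hr hε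
    obtain ⟨δ, hδ, hδv⟩ := exists_pos_forall_norm_lt_le (c := dilation r l v)
      fun i => mul_pos (rpow_pos_of_pos hl.1 _) (hv i)
    refine ⟨δ, hδ, fun φ x hφ hx hφδ k => ?_⟩
    have hxk := hx.mem_of_invariant hd.2 (hinv l hl)
      (fun m h₁ h₂ => ⟨fun i => (hφ m h₁ h₂ i).1, hδv _ (hφδ m h₁ h₂)⟩) k (by omega)
    exact (norm_le_norm_of_mem_Icc hxk).trans_lt hlε
  · have h₀ : ∀ m, -(dmax : ℤ) ≤ m → x m ∈ Icc 0 v := by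
      simpa only [dilation_one] using hx.mem_of_invariant hd.2 (hinv 1 ⟨one_pos, le_rfl⟩)
        fun k h₁ h₂ => dilation_one.symm ▸ ⟨fun i => (hφ k h₁ h₂ i).1, fun i => (hφ k h₁ h₂ i).2⟩
    have hshrink : Tendsto (fun j : ℕ => dilation r (q ^ j) v) atTop (𝓝 0) :=
      (tendsto_dilation_nhds_zero hr).comp (tendsto_pow_atTop_nhds_zero_of_lt_one hq.1.le hq.2)
    exact (tendsto_nhds_zero_of_forall_eventually_mem_Icc hshrink
      (hx.eventually_mem_Icc_dilation_pow hd.1 (Ioo_subset_Ioc_self hq) hcontract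
      (eventually_atTop.2 ⟨_, h₀⟩))).comp
      tendsto_natCast_atTop_atTop

/-- Corollary (local asymptotic stability, degree `p > 0`): for the discrete system
`x(k+1) = f(x(k)) + g(x(k-d(k)))` with `f, g` non-decreasing on the nonnegative orthant,
homogeneous of degree `p > 0`, delay satisfying Assumption C, and `v > 0` with
`f(v) + g(v) < v`, the origin is asymptotically stable with respect to initial conditions
`0 ≤ φ(k) ≤ v`: the zero solution is Lyapunov stable over such initial conditions, and every
solution from such an initial condition converges to the origin. -/
theorem discrete_homogeneous_nondecreasing_local_asymptotic_stability
    (n : ℕ) (f g : (Fin n → ℝ) → Fin n → ℝ)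
    (r : Fin n → ℝ) (hr : ∀ i, 0 < r i) (p : ℝ) (hp : 0 < p)
    (hf0 : f 0 = 0) (hg0 : g 0 = 0)
    (hfc : Continuous f) (hgc : Continuous g)
    (hfmono : NonDecOn n f) (hgmono : NonDecOn n g)
    (hfhom : Homogeneous n r p f) (hghom : Homogeneous n r p g)
    (d : ℕ → ℕ) (dmax : ℕ) (hd : DelayC d dmax)
    (v : Fin n → ℝ) (hv : ∀ i, 0 < v i) (hfgv : ∀ i, f v i + g v i < v i) :
    (∀ ε > (0 : ℝ), ∃ δ > (0 : ℝ), ∀ φ x : ℤ → Fin n → ℝ,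
        (∀ k : ℤ, -(dmax : ℤ) ≤ k → k ≤ 0 → ∀ i, 0 ≤ φ k i ∧ φ k i ≤ v i) →
        IsSolutionD n f g d dmax φ x →
        (∀ k : ℤ, -(dmax : ℤ) ≤ k → k ≤ 0 → ‖φ k‖ < δ) →
        ∀ k : ℕ, ‖x (k : ℤ)‖ < ε) ∧
    ∀ φ x : ℤ → Fin n → ℝ,
      (∀ k : ℤ, -(dmax : ℤ) ≤ k → k ≤ 0 → ∀ i, 0 ≤ φ k i ∧ φ k i ≤ v i) →
      IsSolutionD n f g d dmax φ x →
      Tendsto (fun k : ℕ => x (k : ℤ)) atTop (nhds 0) :=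
  discrete_homogeneous_nondecreasing_local_asymptotic_stability_general n f g r hr p hp hf0 hg0
    hfmono hgmono hfhom hghom d dmax hd v hv hfgv
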